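/- arXiv:2202.00721 — 2 statements merged into one kernel-verified Lean document; each statement's English description precedes it below -/
import Mathlib

section
/- Let S be a finite nonempty subset of {f,g}^k (binary strings of length k over alphabet {f,g}), and let X be a set with a bijection π : X ≅ X × X inducing for each n a bijection X ≅ X^({f,g}^n). Fix an assignment b : S → X. Then the set of a ∈ X such that the string-evaluation of s at a equals b(s) for every s ∈ S is in bijection with X^({f,g}^k \ S). -/
/-- Evaluation of a word over `{f,g}` (encoded as `List Bool`, `false ↦ π₁`, `true ↦ π₂`)
at a point of `X`, where `π : X ≃ X × X` is a pairing bijection. -/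
def wordEval {X : Type*} (π : X ≃ X × X) : List Bool → X → X
  | [], a => a
  | b :: rest, a => wordEval π rest (if b then (π a).2 else (π a).1)

lemma wordEval_equiv {X : Type*} (π : X ≃ X × X) :
    ∀ k : ℕ, ∃ E : X ≃ ((Fin k → Bool) → X),
      ∀ a s, E a s = wordEval π (List.ofFn s) a := by
  intro k
  induction k with
  | zero =>
    refine ⟨(Equiv.funUnique (Fin 0 → Bool) X).symm, fun a s => ?_⟩
    simp [Equiv.funUnique, wordEval]
  | succ k ih =>
    obtain ⟨E, hE⟩ := ih
    refine ⟨⟨fun a s => E (if s 0 then (π a).2 else (π a).1) (Fin.tail s),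
      fun h => π.symm (E.symm (fun t => h (Fin.cons false t)),
        E.symm (fun t => h (Fin.cons true t))), ?_, ?_⟩, ?_⟩
    · intro a
      simp only [Fin.cons_zero, Fin.tail_cons, Bool.false_eq_true, if_false, if_true]
      have h1 : (fun t => E (π a).1 t) = E (π a).1 := rfl
      have h2 : (fun t => E (π a).2 t) = E (π a).2 := rfl
      rw [h1, h2, Equiv.symm_apply_apply, Equiv.symm_apply_apply]
      exact π.symm_apply_apply a
    · intro h
      funext s
      have hs := Fin.cons_self_tail s
      rcases Bool.eq_false_or_eq_true (s 0) with h0 | h0 <;>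
        · simp only [Equiv.apply_symm_apply, h0, Bool.false_eq_true, if_false, if_true]
          conv_rhs => rw [← hs, h0]
    · intro a s
      simp only [Equiv.coe_fn_mk]
      rw [hE, List.ofFn_succ]
      rfl

/-- Lemma 4.12 ('basic'): for a nonempty set `S` of strings of length `k` over `{f,g}`
and an assignment `b : S → X`, the solution set `{a : ∀ s ∈ S, s(a) = b s}` is in
bijection with `X^({f,g}^k ∖ S)`. -/
theorem stmt12 (X : Type*) (π : X ≃ X × X) (k : ℕ)
    (S : Finset (Fin k → Bool)) (hS : S.Nonempty) (b : (Fin k → Bool) → X) :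
    Nonempty
      ({a : X // ∀ s ∈ S, wordEval π (List.ofFn s) a = b s} ≃
        ({s : Fin k → Bool // s ∉ S} → X)) := by
  obtain ⟨E, hE⟩ := wordEval_equiv π k
  have e1 : {a : X // ∀ s ∈ S, wordEval π (List.ofFn s) a = b s} ≃
      {h : (Fin k → Bool) → X //
        h ∘ Subtype.val = fun s : {s : Fin k → Bool // s ∈ S} => b s.1} := by
    refine E.subtypeEquiv fun a => ?_
    rw [funext_iff]
    constructor
    · intro hh t
      simpa [hE] using hh t.1 t.2
    · intro hh s hs
      simpa [hE] using hh ⟨s, hs⟩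
  exact ⟨e1.trans (Equiv.subtypePreimage (· ∈ S) fun s => b s.1)⟩
end

section
/- Let ~ be an equivalence relation on {f,g}^k with l equivalence classes, let S ⊆ {f,g}^k be a union of some of these classes comprising l − j of them, let X be a set with an iterated pairing bijection X ≅ X^({f,g}^k), and fix b : S → X constant on ~-classes. Then the set of a ∈ X such that s(a) = b(s) for all s ∈ S and s(a) = t(a) whenever s ~ t is in bijection with X^j. -/
lemma wordEval_succ {X : Type*} (π : X ≃ X × X) {k : ℕ} (s : Fin (k+1) → Bool) (a : X) :
    wordEval π (List.ofFn s) a =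
      wordEval π (List.ofFn (Fin.tail s)) (if s 0 then (π a).2 else (π a).1) := by
  rw [List.ofFn_succ]
  rfl

lemma evalBij {X : Type*} (π : X ≃ X × X) :
    ∀ k : ℕ, Function.Bijective
      (fun (a : X) (s : Fin k → Bool) => wordEval π (List.ofFn s) a) := by
  intro k
  induction k with
  | zero =>
    constructor
    · intro a a' h
      have := congrFun h (fun i => i.elim0)
      simpa [wordEval] using this
    · intro g
      exact ⟨g (fun i => i.elim0), by
        funext s
        have : s = fun i => i.elim0 := by funext i; exact i.elim0
        simp [this, wordEval, List.ofFn]⟩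
  | succ k ih =>
    constructor
    · intro a a' h
      have h1 : (π a).1 = (π a').1 := by
        apply ih.1
        funext t
        have := congrFun h (Fin.cons false t)
        simp only at this ⊢
        rw [wordEval_succ, wordEval_succ] at this
        simpa [Fin.tail_cons] using this
      have h2 : (π a).2 = (π a').2 := by
        apply ih.1
        funext t
        have := congrFun h (Fin.cons true t)
        simp only at this ⊢
        rw [wordEval_succ, wordEval_succ] at this
        simpa [Fin.tail_cons] using this
      have : π a = π a' := Prod.ext h1 h2
      exact π.injective this
    · intro g
      obtain ⟨x0, hx0⟩ := ih.2 (fun t => g (Fin.cons false t))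
      obtain ⟨x1, hx1⟩ := ih.2 (fun t => g (Fin.cons true t))
      refine ⟨π.symm (x0, x1), ?_⟩
      funext s
      show wordEval π (List.ofFn s) (π.symm (x0, x1)) = g s
      rw [wordEval_succ]
      simp only [Equiv.apply_symm_apply]
      rcases hs : s 0 with _ | _
      · have := congrFun hx0 (Fin.tail s)
        simp only at this
        rw [if_neg (by simp), this]
        congr 1
        rw [← hs, Fin.cons_self_tail]
      · have := congrFun hx1 (Fin.tail s)
        simp only at this
        rw [if_pos rfl, this]
        congr 1
        rw [← hs, Fin.cons_self_tail]

/-- Lemma 4.13 ('basicplus'): let `~` be an equivalence relation on `{f,g}^k`, let `S`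
be a union of `~`-classes, and let `b` be constant on `~`-classes. Then the set of
`a ∈ X` with `s(a) = b s` for `s ∈ S` and `s(a) = t(a)` whenever `s ~ t` is in bijection
with `X^J`, where `J` is the set of `~`-classes not meeting `S`. -/
theorem stmt13 (X : Type*) (π : X ≃ X × X) (k : ℕ) (r : Setoid (Fin k → Bool))
    (S : Finset (Fin k → Bool))
    (hSsat : ∀ s t : Fin k → Bool, r.r s t → (s ∈ S ↔ t ∈ S))
    (b : (Fin k → Bool) → X)
    (hb : ∀ s t : Fin k → Bool, r.r s t → b s = b t) :
    Nonempty
      ({a : X // (∀ s ∈ S, wordEval π (List.ofFn s) a = b s) ∧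
          ∀ s t : Fin k → Bool, r.r s t →
            wordEval π (List.ofFn s) a = wordEval π (List.ofFn t) a} ≃
        ({q : Quotient r // ∀ s : Fin k → Bool, Quotient.mk r s = q → s ∉ S} → X)) := by
  classical
  set E : X ≃ ((Fin k → Bool) → X) := Equiv.ofBijective _ (evalBij π k) with hE
  -- step 1: transport along E
  have e1 : {a : X // (∀ s ∈ S, wordEval π (List.ofFn s) a = b s) ∧
          ∀ s t : Fin k → Bool, r.r s t →
            wordEval π (List.ofFn s) a = wordEval π (List.ofFn t) a} ≃
      {v : (Fin k → Bool) → X // (∀ s ∈ S, v s = b s) ∧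
          ∀ s t : Fin k → Bool, r.r s t → v s = v t} :=
    E.subtypeEquiv (fun a => Iff.rfl)
  -- step 2: constant on classes = factors through quotient
  have e2 : {v : (Fin k → Bool) → X // (∀ s ∈ S, v s = b s) ∧
          ∀ s t : Fin k → Bool, r.r s t → v s = v t} ≃
      {w : Quotient r → X // ∀ s ∈ S, w (Quotient.mk r s) = b s} :=
    { toFun := fun ⟨v, hv⟩ => ⟨Quotient.lift v hv.2, fun s hs => hv.1 s hs⟩
      invFun := fun ⟨w, hw⟩ => ⟨fun s => w (Quotient.mk r s),
        ⟨fun s hs => hw s hs, fun s t hst => congrArg w (Quotient.sound hst)⟩⟩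
      left_inv := fun ⟨v, hv⟩ => rfl
      right_inv := fun ⟨w, hw⟩ => by
        ext q
        induction q using Quotient.ind
        rfl }
  -- step 3: pinned on classes meeting S, free elsewhere
  have e3 : {w : Quotient r → X // ∀ s ∈ S, w (Quotient.mk r s) = b s} ≃
      ({q : Quotient r // ∀ s : Fin k → Bool, Quotient.mk r s = q → s ∉ S} → X) :=
    { toFun := fun w q => w.1 q.1
      invFun := fun u =>
        ⟨fun q =>
          if h : ∀ s : Fin k → Bool, Quotient.mk r s = q → s ∉ S then u ⟨q, h⟩
          else Quotient.lift b hb q,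
        by
          intro s hs
          show (if h : _ then _ else _) = b s
          rw [dif_neg]
          · rfl
          · push_neg
            exact ⟨s, rfl, hs⟩⟩
      left_inv := by
        rintro ⟨w, hw⟩
        ext q
        show (if h : _ then _ else _) = w q
        split_ifs with h
        · rfl
        · push_neg at h
          obtain ⟨s, hsq, hsS⟩ := h
          subst hsq
          exact (hw s hsS).symm
      right_inv := by
        intro u
        funext q
        show (if h : _ then _ else _) = u q
        rw [dif_pos q.2] }
  exact ⟨(e1.trans e2).trans e3⟩
end
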